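/- arXiv:2505.20191 — 6 statements merged into one kernel-verified Lean document; each statement's English description precedes it below -/
import Mathlib

section
/- Let 𝒮 be the space of smooth real-valued functions ψ on ℝ × S² such that for all integers k, m ≥ 0 one has |u|^k |∂_u^m ψ(u,n)| → 0 as |u| → ∞, uniformly in n ∈ S². Then the map σ(ψ₁, ψ₂) := (1/2) ∫_{S²} ∫_ℝ ( ψ₂(u,n) ∂_u ψ₁(u,n) − ψ₁(u,n) ∂_u ψ₂(u,n) ) du dσ(n) is a well-defined, bilinear, antisymmetric form on 𝒮, and it is nondegenerate: if ψ ∈ 𝒮 satisfies σ(ψ, φ) = 0 for every φ ∈ 𝒮, then ψ = 0. -/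
open MeasureTheory Metric Filter
open scoped Topology Manifold InnerProductSpace

noncomputable section

/-- `E3` is Euclidean three-dimensional space. -/
abbrev E3 : Type := EuclideanSpace ℝ (Fin 3)

/-- `S2` is the unit sphere in `E3`. -/
abbrev S2 : Type := Metric.sphere (0 : E3) 1

instance : Fact (Module.finrank ℝ E3 = 2 + 1) := ⟨by simp⟩

/-- The standard surface measure on the unit sphere `S²`. -/
def sphereMeasure : Measure S2 := (volume : Measure E3).toSphere

/-- The space `𝒮(ℑ⁺)` of smooth functions `ψ` on `ℝ × S²` such that
`|u|^k |∂_u^m ψ(u,n)| → 0` as `|u| → ∞`, uniformly in `n ∈ S²`, for all `k, m ≥ 0`. -/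
def InScriSpace (ψ : ℝ × S2 → ℝ) : Prop :=
  ContMDiff ((𝓘(ℝ, ℝ)).prod (𝓡 2)) (𝓘(ℝ, ℝ)) (⊤ : ℕ∞) ψ ∧
  ∀ k m : ℕ, ∀ ε : ℝ, 0 < ε → ∃ R : ℝ, ∀ u : ℝ, R ≤ |u| →
    ∀ n : S2, |u| ^ k * |iteratedDeriv m (fun v : ℝ => ψ (v, n)) u| < ε

/-- The symplectic form
`σ(ψ₁, ψ₂) = (1/2) ∫_{S²} ∫_ℝ (ψ₂ ∂_u ψ₁ − ψ₁ ∂_u ψ₂) du dσ(n)` on `𝒮(ℑ⁺)`. -/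
def scriForm (ψ₁ ψ₂ : ℝ × S2 → ℝ) : ℝ :=
  (1 / 2) * ∫ n : S2, (∫ u : ℝ,
    (ψ₂ (u, n) * deriv (fun v : ℝ => ψ₁ (v, n)) u
      - ψ₁ (u, n) * deriv (fun v : ℝ => ψ₂ (v, n)) u)) ∂sphereMeasure

/-! Bilinearity and antisymmetry are pointwise identities for the density
`ψ₂ ∂_u ψ₁ − ψ₁ ∂_u ψ₂`, which may be integrated term by term because the decay of `ψ` and
`∂_u ψ` dominates the density by `K (1 + u²)⁻¹`, integrable on `S² × ℝ`. For nondegeneracy,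
pair `ψ` with `g(n) b(u)` for smooth `g` on `S²` and a test function `b` on `ℝ`: the fundamental
lemma of the calculus of variations on `S²` makes `∫ (b ∂_u ψ − ψ b') du = 2 ∫ b ∂_u ψ du`
vanish for every `n`, and on `ℝ` it gives `∂_u ψ = 0`. So each `ψ(·, n)` is a constant tending
to `0`. -/

open Function Set
open scoped ContDiff

def derivFst {M : Type*} (ψ : ℝ × M → ℝ) (p : ℝ × M) : ℝ := deriv (fun v => ψ (v, p.2)) p.1

section Slices

variable {E H M : Type*} [NormedAddCommGroup E] [NormedSpace ℝ E] [TopologicalSpace H]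
  {I : ModelWithCorners ℝ E H} [TopologicalSpace M] [ChartedSpace H M] {ψ : ℝ × M → ℝ}

theorem ContMDiff.contDiff_slice {n : WithTop ℕ∞} (h : ContMDiff (𝓘(ℝ, ℝ).prod I) 𝓘(ℝ, ℝ) n ψ)
    (x : M) : ContDiff ℝ n fun v => ψ (v, x) :=
  (h.comp (contMDiff_id.prodMk contMDiff_const)).contDiff

theorem ContMDiff.continuous_derivFst [I.Boundaryless] {n : WithTop ℕ∞} [IsManifold I n M]
    (h : ContMDiff (𝓘(ℝ, ℝ).prod I) 𝓘(ℝ, ℝ) n ψ) (hn : 1 ≤ n) : Continuous (derivFst ψ) := by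
  refine continuous_iff_continuousAt.2 fun ⟨u₀, x₀⟩ => ?_
  set e := extChartAt I x₀
  set G : ℝ × E → ℝ := fun q => ψ (q.1, e.symm q.2)
  have hT : IsOpen (univ ×ˢ e.target : Set (ℝ × E)) :=
    isOpen_univ.prod (isOpen_extChartAt_target x₀)
  have hG : ContDiffOn ℝ n G (univ ×ˢ e.target) := by
    have := (contMDiff_iff.1 h).2 (u₀, x₀) 0
    simp only [extChartAt_prod, extChartAt_model_space_eq_id, PartialEquiv.refl_coe,
      PartialEquiv.prod_coe_symm, PartialEquiv.refl_symm, PartialEquiv.prod_target,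
      PartialEquiv.refl_target, PartialEquiv.refl_source, Function.comp_def, id_eq,
      preimage_univ, inter_univ] at this
    exact this
  have hderiv : ∀ p ∈ (univ ×ˢ e.source : Set (ℝ × M)),
      derivFst ψ p = fderiv ℝ G (p.1, e p.2) (1, 0) := by
    rintro ⟨v, x⟩ ⟨-, hx⟩
    have hmem : (v, e x) ∈ (univ ×ˢ e.target : Set (ℝ × E)) := ⟨mem_univ _, e.map_source hx⟩
    have hGd : DifferentiableAt ℝ G (v, e x) :=
      (hG.differentiableOn (zero_lt_one.trans_le hn).ne').differentiableAt (hT.mem_nhds hmem)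
    have hslice : (fun w : ℝ => ψ (w, x)) = fun w => G (w, e x) := by
      funext w; simp only [G, e.left_inv hx]
    have hline : HasDerivAt (fun w : ℝ => ((w, e x) : ℝ × E)) ((1 : ℝ), (0 : E)) v :=
      (hasDerivAt_id v).prodMk (hasDerivAt_const v (e x))
    rw [derivFst, hslice]
    exact (hGd.hasFDerivAt.comp_hasDerivAt v hline).deriv
  have hU : (univ ×ˢ e.source : Set (ℝ × M)) ∈ 𝓝 (u₀, x₀) :=
    (isOpen_univ.prod (isOpen_extChartAt_source x₀)).mem_nhds ⟨mem_univ _, mem_extChartAt_source x₀⟩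
  have hchart : ContinuousOn (fun p : ℝ × M => (p.1, e p.2)) (univ ×ˢ e.source) :=
    continuous_fst.continuousOn.prodMk
      ((continuousOn_extChartAt x₀).comp continuous_snd.continuousOn fun p hp => hp.2)
  have hcont : ContinuousOn (fun p : ℝ × M => fderiv ℝ G (p.1, e p.2) (1, 0)) (univ ×ˢ e.source) :=
    ((hG.continuousOn_fderiv_of_isOpen hT hn).comp hchart
      fun p hp => ⟨mem_univ _, e.map_source hp.2⟩).clm_apply continuousOn_const
  exact (hcont.continuousAt hU).congr (eventually_of_mem hU fun p hp => (hderiv p hp).symm)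

end Slices

section Decay

variable {X : Type*}

theorem exists_abs_le_mul_inv_one_add_sq [TopologicalSpace X] [CompactSpace X] {g : ℝ × X → ℝ}
    (hg : Continuous g)
    (hdecay : ∃ R, ∀ u, R ≤ |u| → ∀ x, (1 + u ^ 2) * |g (u, x)| ≤ 1) :
    ∃ C, 0 ≤ C ∧ ∀ u x, |g (u, x)| ≤ C * (1 + u ^ 2)⁻¹ := by
  obtain ⟨R, hR⟩ := hdecay
  obtain ⟨M, hM⟩ := (isCompact_Icc (a := -R) (b := R)).prod (isCompact_univ (X := X))
    |>.exists_bound_of_continuousOn hg.continuousOn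
  refine ⟨max 1 ((1 + R ^ 2) * M), le_max_of_le_left zero_le_one, fun u x => ?_⟩
  rw [← div_eq_mul_inv, le_div_iff₀ (by positivity), mul_comm]
  rcases le_or_gt R |u| with hu | hu
  · exact (hR u hu x).trans (le_max_left _ _)
  · have hgM : |g (u, x)| ≤ M := hM (u, x) ⟨abs_le.1 hu.le, mem_univ x⟩
    have huR : u ^ 2 ≤ R ^ 2 := sq_le_sq.2 (hu.le.trans (le_abs_self R))
    calc (1 + u ^ 2) * |g (u, x)| ≤ (1 + R ^ 2) * M :=
          mul_le_mul (by linarith) hgM (abs_nonneg _) (by positivity)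
      _ ≤ _ := le_max_right _ _

theorem integrable_of_abs_le_mul_inv_one_add_sq [MeasurableSpace X] {μ : Measure X}
    [IsFiniteMeasure μ] {F : X × ℝ → ℝ} (hF : AEStronglyMeasurable F (μ.prod volume)) {K : ℝ}
    (hK : ∀ p, |F p| ≤ K * (1 + p.2 ^ 2)⁻¹) : Integrable F (μ.prod volume) := by
  have hbound : Integrable (fun p : X × ℝ => K * (1 + p.2 ^ 2)⁻¹) (μ.prod volume) := by
    simpa using (integrable_const (μ := μ) (1 : ℝ)).mul_prod
      (integrable_inv_one_add_sq.const_mul K)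
  exact hbound.mono' hF (Eventually.of_forall hK)

theorem continuous_integral_of_abs_le_mul_inv_one_add_sq [TopologicalSpace X]
    [FirstCountableTopology X] {F : X × ℝ → ℝ} (hF : Continuous F)
    {K : ℝ} (hK : ∀ p, |F p| ≤ K * (1 + p.2 ^ 2)⁻¹) : Continuous fun x => ∫ u, F (x, u) :=
  continuous_of_dominated (fun x => (hF.comp (Continuous.prodMk_right x)).aestronglyMeasurable)
    (fun x => Eventually.of_forall fun u => hK (x, u)) (integrable_inv_one_add_sq.const_mul K)
    (Eventually.of_forall fun u => hF.comp (Continuous.prodMk_left u))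

end Decay

theorem InScriSpace.exists_abs_iteratedDeriv_le {ψ : ℝ × S2 → ℝ} (hψ : InScriSpace ψ) (m : ℕ)
    (hc : Continuous fun p : ℝ × S2 => iteratedDeriv m (fun v => ψ (v, p.2)) p.1) :
    ∃ C, 0 ≤ C ∧ ∀ u n, |iteratedDeriv m (fun v => ψ (v, n)) u| ≤ C * (1 + u ^ 2)⁻¹ := by
  refine exists_abs_le_mul_inv_one_add_sq hc ?_
  obtain ⟨R₀, h₀⟩ := hψ.2 0 m (1 / 2) (by norm_num)
  obtain ⟨R₂, h₂⟩ := hψ.2 2 m (1 / 2) (by norm_num)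
  refine ⟨max R₀ R₂, fun u hu n => ?_⟩
  have e₀ := h₀ u (le_of_max_le_left hu) n
  have e₂ := h₂ u (le_of_max_le_right hu) n
  rw [pow_zero, one_mul] at e₀
  rw [sq_abs] at e₂
  linarith [add_mul 1 (u ^ 2) |iteratedDeriv m (fun v => ψ (v, n)) u|]

theorem InScriSpace.exists_abs_le {ψ : ℝ × S2 → ℝ} (hψ : InScriSpace ψ) :
    ∃ C, 0 ≤ C ∧ ∀ u n, |ψ (u, n)| ≤ C * (1 + u ^ 2)⁻¹ := by
  simpa using hψ.exists_abs_iteratedDeriv_le 0 (by simpa using hψ.1.continuous)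

theorem InScriSpace.continuous_derivFst {ψ : ℝ × S2 → ℝ} (hψ : InScriSpace ψ) :
    Continuous (derivFst ψ) :=
  hψ.1.continuous_derivFst (by exact_mod_cast le_top)

theorem InScriSpace.exists_abs_derivFst_le {ψ : ℝ × S2 → ℝ} (hψ : InScriSpace ψ) :
    ∃ C, 0 ≤ C ∧ ∀ u n, |derivFst ψ (u, n)| ≤ C * (1 + u ^ 2)⁻¹ := by
  simpa [derivFst] using hψ.exists_abs_iteratedDeriv_le 1
    (by simp only [iteratedDeriv_one]; exact hψ.continuous_derivFst)

def scriDensity {M : Type*} (ψ₁ ψ₂ : ℝ × M → ℝ) (p : M × ℝ) : ℝ :=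
  ψ₂ (p.2, p.1) * derivFst ψ₁ (p.2, p.1) - ψ₁ (p.2, p.1) * derivFst ψ₂ (p.2, p.1)

theorem scriForm_eq_integral_scriDensity (ψ₁ ψ₂ : ℝ × S2 → ℝ) :
    scriForm ψ₁ ψ₂ = 1 / 2 * ∫ n, (∫ u, scriDensity ψ₁ ψ₂ (n, u)) ∂sphereMeasure :=
  rfl

section Density

variable {M : Type*}

theorem scriDensity_swap (ψ₁ ψ₂ : ℝ × M → ℝ) : scriDensity ψ₂ ψ₁ = -scriDensity ψ₁ ψ₂ := by
  funext p
  simp only [scriDensity, Pi.neg_apply]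
  ring

theorem derivFst_const_mul_add {ψ ψ' : ℝ × M → ℝ} (hψ : ∀ x, Differentiable ℝ fun v => ψ (v, x))
    (hψ' : ∀ x, Differentiable ℝ fun v => ψ' (v, x)) (a : ℝ) (p : ℝ × M) :
    derivFst (fun q => a * ψ q + ψ' q) p = a * derivFst ψ p + derivFst ψ' p := by
  simp only [derivFst]
  rw [deriv_fun_add ((hψ p.2 p.1).const_mul a) (hψ' p.2 p.1), deriv_const_mul_field]

theorem scriDensity_const_mul_add_left {ψ₁ ψ₁' : ℝ × M → ℝ}
    (h₁ : ∀ x, Differentiable ℝ fun v => ψ₁ (v, x))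
    (h₁' : ∀ x, Differentiable ℝ fun v => ψ₁' (v, x)) (ψ₂ : ℝ × M → ℝ) (a : ℝ) :
    scriDensity (fun p => a * ψ₁ p + ψ₁' p) ψ₂
      = fun p => a * scriDensity ψ₁ ψ₂ p + scriDensity ψ₁' ψ₂ p := by
  funext p
  simp only [scriDensity, derivFst_const_mul_add h₁ h₁']
  ring

theorem scriDensity_mul_right (ψ φ : ℝ × M → ℝ) (g : M → ℝ) (p : M × ℝ) :
    scriDensity ψ (fun q => g q.2 * φ q) p = g p.1 * scriDensity ψ φ p := by
  simp only [scriDensity, derivFst, deriv_const_mul_field]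
  ring

end Density

instance : IsFiniteMeasure sphereMeasure :=
  inferInstanceAs (IsFiniteMeasure (volume : Measure E3).toSphere)

instance : sphereMeasure.IsOpenPosMeasure :=
  inferInstanceAs (volume : Measure E3).toSphere.IsOpenPosMeasure

section InScriSpace

variable {ψ ψ₁ ψ₁' ψ₂ ψ₂' : ℝ × S2 → ℝ}

theorem InScriSpace.differentiable_slice (hψ : InScriSpace ψ) (n : S2) :
    Differentiable ℝ fun v => ψ (v, n) :=
  (hψ.1.contDiff_slice n).differentiable (by simp)

theorem continuous_scriDensity (h₁ : InScriSpace ψ₁) (h₂ : InScriSpace ψ₂) :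
    Continuous (scriDensity ψ₁ ψ₂) := by
  have hswap : Continuous fun p : S2 × ℝ => (p.2, p.1) := continuous_swap
  exact ((h₂.1.continuous.comp hswap).mul (h₁.continuous_derivFst.comp hswap)).sub
    ((h₁.1.continuous.comp hswap).mul (h₂.continuous_derivFst.comp hswap))

theorem exists_abs_scriDensity_le (h₁ : InScriSpace ψ₁) (h₂ : InScriSpace ψ₂) :
    ∃ K, ∀ p, |scriDensity ψ₁ ψ₂ p| ≤ K * (1 + p.2 ^ 2)⁻¹ := by
  obtain ⟨C₁, hC₁, hψ₁⟩ := h₁.exists_abs_le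
  obtain ⟨C₂, hC₂, hψ₂⟩ := h₂.exists_abs_le
  obtain ⟨D₁, -, hD₁⟩ := h₁.exists_abs_derivFst_le
  obtain ⟨D₂, -, hD₂⟩ := h₂.exists_abs_derivFst_le
  refine ⟨C₂ * D₁ + C₁ * D₂, fun ⟨n, u⟩ => ?_⟩
  set t := (1 + u ^ 2)⁻¹
  have ht : t ≤ 1 := inv_le_one_of_one_le₀ (le_add_of_nonneg_right (sq_nonneg u))
  have hle : ∀ C, 0 ≤ C → C * t ≤ C := fun C hC => mul_le_of_le_one_right hC ht
  calc |scriDensity ψ₁ ψ₂ (n, u)|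
      ≤ |ψ₂ (u, n)| * |derivFst ψ₁ (u, n)| + |ψ₁ (u, n)| * |derivFst ψ₂ (u, n)| := by
        rw [scriDensity, ← abs_mul, ← abs_mul]
        exact abs_sub _ _
    _ ≤ C₂ * (D₁ * t) + C₁ * (D₂ * t) := by
        gcongr
        exacts [(hψ₂ u n).trans (hle C₂ hC₂), hD₁ u n, (hψ₁ u n).trans (hle C₁ hC₁), hD₂ u n]
    _ = (C₂ * D₁ + C₁ * D₂) * t := by ring

theorem integrable_scriDensity (h₁ : InScriSpace ψ₁) (h₂ : InScriSpace ψ₂) :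
    Integrable (scriDensity ψ₁ ψ₂) (sphereMeasure.prod volume) :=
  have ⟨_, hK⟩ := exists_abs_scriDensity_le h₁ h₂
  integrable_of_abs_le_mul_inv_one_add_sq (continuous_scriDensity h₁ h₂).aestronglyMeasurable hK

theorem continuous_integral_scriDensity (h₁ : InScriSpace ψ₁) (h₂ : InScriSpace ψ₂) :
    Continuous fun n => ∫ u, scriDensity ψ₁ ψ₂ (n, u) :=
  have ⟨_, hK⟩ := exists_abs_scriDensity_le h₁ h₂
  continuous_integral_of_abs_le_mul_inv_one_add_sq (continuous_scriDensity h₁ h₂) hK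

theorem scriForm_const_mul_add_left (h₁ : InScriSpace ψ₁) (h₁' : InScriSpace ψ₁')
    (h₂ : InScriSpace ψ₂) (a : ℝ) :
    scriForm (fun p => a * ψ₁ p + ψ₁' p) ψ₂ = a * scriForm ψ₁ ψ₂ + scriForm ψ₁' ψ₂ := by
  have i₁ := integrable_scriDensity h₁ h₂
  have i₁' := integrable_scriDensity h₁' h₂
  have i : Integrable (fun p => a * scriDensity ψ₁ ψ₂ p + scriDensity ψ₁' ψ₂ p)
      (sphereMeasure.prod volume) := (i₁.const_mul a).add i₁'
  simp only [scriForm_eq_integral_scriDensity,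
    scriDensity_const_mul_add_left h₁.differentiable_slice h₁'.differentiable_slice]
  rw [← integral_prod _ i, integral_add (i₁.const_mul a) i₁',
    integral_const_mul, integral_prod _ i₁, integral_prod _ i₁']
  ring

theorem scriForm_antisymm (ψ₁ ψ₂ : ℝ × S2 → ℝ) : scriForm ψ₁ ψ₂ = -scriForm ψ₂ ψ₁ := by
  simp only [scriForm_eq_integral_scriDensity, scriDensity_swap ψ₁ ψ₂, Pi.neg_apply,
    integral_neg]
  ring

theorem scriForm_const_mul_add_right (h₁ : InScriSpace ψ₁) (h₂ : InScriSpace ψ₂)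
    (h₂' : InScriSpace ψ₂') (a : ℝ) :
    scriForm ψ₁ (fun p => a * ψ₂ p + ψ₂' p) = a * scriForm ψ₁ ψ₂ + scriForm ψ₁ ψ₂' := by
  rw [scriForm_antisymm, scriForm_const_mul_add_left h₂ h₂' h₁, scriForm_antisymm ψ₁ ψ₂,
    scriForm_antisymm ψ₁ ψ₂']
  ring

end InScriSpace

theorem integral_mul_deriv_sub_eq_two_mul {f b : ℝ → ℝ} (hf : ContDiff ℝ 1 f) (hb : ContDiff ℝ 1 b)
    (hbs : HasCompactSupport b) :
    ∫ u, (b u * deriv f u - f u * deriv b u) = 2 * ∫ u, b u * deriv f u := by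
  have hf' := hf.continuous_deriv le_rfl
  have hb' := hb.continuous_deriv le_rfl
  have i₁ : Integrable fun u => b u * deriv f u :=
    (hb.continuous.mul hf').integrable_of_hasCompactSupport hbs.mul_right
  have i₂ : Integrable fun u => f u * deriv b u :=
    (hf.continuous.mul hb').integrable_of_hasCompactSupport hbs.deriv.mul_left
  have hparts : ∫ u, f u * deriv b u = -∫ u, deriv f u * b u :=
    integral_mul_deriv_eq_deriv_mul_of_integrable
      (fun u _ => (hf.differentiable one_ne_zero u).hasDerivAt)
      (fun u _ => (hb.differentiable one_ne_zero u).hasDerivAt) i₂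
      ((hf'.mul hb.continuous).integrable_of_hasCompactSupport hbs.mul_left)
      ((hf.continuous.mul hb.continuous).integrable_of_hasCompactSupport hbs.mul_left)
  rw [integral_sub i₁ i₂, hparts]
  simp only [mul_comm (deriv f _)]
  ring

section Nondegeneracy

variable {ψ φ : ℝ × S2 → ℝ}

theorem InScriSpace.mul_of_contMDiff {g : S2 → ℝ} (hg : ContMDiff (𝓡 2) 𝓘(ℝ, ℝ) ∞ g)
    (hφ : InScriSpace φ) : InScriSpace fun p => g p.2 * φ p := by
  refine ⟨(hg.comp contMDiff_snd).mul hφ.1, fun k m ε hε => ?_⟩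
  obtain ⟨G, hG⟩ := isCompact_univ.exists_bound_of_continuousOn hg.continuous.continuousOn
  have hG₀ : 0 < |G| + 1 := by positivity
  obtain ⟨R, hR⟩ := hφ.2 k m (ε / (|G| + 1)) (div_pos hε hG₀)
  refine ⟨R, fun u hu n => ?_⟩
  have hgn : |g n| ≤ |G| + 1 := ((hG n (mem_univ n)).trans (le_abs_self G)).trans (by linarith)
  have hφn := hR u hu n
  change |u| ^ k * |iteratedDeriv m (fun v => g n * φ (v, n)) u| < ε
  rw [iteratedDeriv_const_mul_field, abs_mul, mul_left_comm]
  calc |g n| * (|u| ^ k * |iteratedDeriv m (fun v => φ (v, n)) u|)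
      ≤ (|G| + 1) * (|u| ^ k * |iteratedDeriv m (fun v => φ (v, n)) u|) :=
        mul_le_mul_of_nonneg_right hgn (by positivity)
    _ < (|G| + 1) * (ε / (|G| + 1)) := mul_lt_mul_of_pos_left hφn hG₀
    _ = ε := mul_div_cancel₀ ε hG₀.ne'

theorem inScriSpace_comp_fst {b : ℝ → ℝ} (hb : ContDiff ℝ ∞ b) (hbs : HasCompactSupport b) :
    InScriSpace fun p : ℝ × S2 => b p.1 := by
  refine ⟨hb.contMDiff.comp contMDiff_fst, fun k m ε hε => ?_⟩
  obtain ⟨r, hr⟩ := hbs.isCompact.isBounded.subset_closedBall 0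
  refine ⟨r + 1, fun u hu n => ?_⟩
  have hu : u ∉ tsupport b := fun h => by
    have := mem_closedBall_zero_iff.1 (hr h)
    rw [Real.norm_eq_abs] at this
    linarith
  have hzero : iteratedDeriv m b u = 0 := by
    rw [iteratedDeriv_eq_iteratedFDeriv,
      notMem_support.1 fun h => hu (support_iteratedFDeriv_subset m h)]
    rfl
  simpa [hzero] using hε

theorem InScriSpace.eq_zero_of_derivFst_eq_zero (hψ : InScriSpace ψ) (h : ∀ p, derivFst ψ p = 0) :
    ψ = 0 := by
  funext ⟨u, n⟩
  have hconst : ∀ v, ψ (v, n) = ψ (u, n) := fun v =>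
    is_const_of_deriv_eq_zero (hψ.differentiable_slice n) (fun w => h (w, n)) v u
  by_contra hne
  obtain ⟨R, hR⟩ := hψ.2 0 0 |ψ (u, n)| (abs_pos.2 hne)
  simpa [hconst] using hR |R| ((le_abs_self R).trans_eq (abs_abs R).symm) n

theorem InScriSpace.eq_zero_of_scriForm_eq_zero (hψ : InScriSpace ψ)
    (h : ∀ φ, InScriSpace φ → scriForm ψ φ = 0) : ψ = 0 := by
  have hsphere : ∀ b : ℝ → ℝ, ContDiff ℝ ∞ b → HasCompactSupport b →
      ∀ n, ∫ u, scriDensity ψ (fun p => b p.1) (n, u) = 0 := by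
    intro b hb hbs
    have hφ := inScriSpace_comp_fst hb hbs
    have hQ := continuous_integral_scriDensity hψ hφ
    refine congrFun ((hQ.ae_eq_iff_eq sphereMeasure continuous_const).1 ?_)
    refine ae_eq_zero_of_integral_contMDiff_smul_eq_zero (𝓡 2) hQ.locallyIntegrable
      fun g hg _ => ?_
    have := h _ (hφ.mul_of_contMDiff hg)
    simpa [scriForm_eq_integral_scriDensity, scriDensity_mul_right, integral_const_mul] using this
  refine hψ.eq_zero_of_derivFst_eq_zero fun ⟨u, n⟩ => ?_
  have hslice := hψ.1.contDiff_slice n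
  have hc : Continuous fun u => derivFst ψ (u, n) := hslice.continuous_deriv (by simp)
  refine congrFun ((hc.ae_eq_iff_eq volume continuous_const).1 ?_) u
  refine ae_eq_zero_of_integral_contDiff_smul_eq_zero hc.locallyIntegrable fun b hb hbs => ?_
  have := hsphere b hb hbs n
  change ∫ u, (b u * deriv (fun v => ψ (v, n)) u - ψ (u, n) * deriv b u) = 0 at this
  rw [integral_mul_deriv_sub_eq_two_mul (hslice.of_le (by simp)) (hb.of_le (by simp)) hbs] at this
  simpa [derivFst] using this

end Nondegeneracy

/-- The form `σ` is well defined (the integrand is integrable), bilinear, antisymmetric,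
and nondegenerate on the space `𝒮(ℑ⁺)`: if `ψ ∈ 𝒮` pairs to zero with every `φ ∈ 𝒮`,
then `ψ = 0`. -/
theorem statement0 :
    (∀ ψ₁ ψ₂ : ℝ × S2 → ℝ, InScriSpace ψ₁ → InScriSpace ψ₂ →
      Integrable (fun p : S2 × ℝ =>
          ψ₂ (p.2, p.1) * deriv (fun v : ℝ => ψ₁ (v, p.1)) p.2
            - ψ₁ (p.2, p.1) * deriv (fun v : ℝ => ψ₂ (v, p.1)) p.2)
        (sphereMeasure.prod (volume : Measure ℝ))) ∧
    (∀ ψ₁ ψ₁' ψ₂ : ℝ × S2 → ℝ, InScriSpace ψ₁ → InScriSpace ψ₁' → InScriSpace ψ₂ →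
      ∀ a : ℝ, scriForm (fun p => a * ψ₁ p + ψ₁' p) ψ₂
        = a * scriForm ψ₁ ψ₂ + scriForm ψ₁' ψ₂) ∧
    (∀ ψ₁ ψ₂ ψ₂' : ℝ × S2 → ℝ, InScriSpace ψ₁ → InScriSpace ψ₂ → InScriSpace ψ₂' →
      ∀ a : ℝ, scriForm ψ₁ (fun p => a * ψ₂ p + ψ₂' p)
        = a * scriForm ψ₁ ψ₂ + scriForm ψ₁ ψ₂') ∧
    (∀ ψ₁ ψ₂ : ℝ × S2 → ℝ, InScriSpace ψ₁ → InScriSpace ψ₂ →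
      scriForm ψ₁ ψ₂ = - scriForm ψ₂ ψ₁) ∧
    (∀ ψ : ℝ × S2 → ℝ, InScriSpace ψ →
      (∀ φ : ℝ × S2 → ℝ, InScriSpace φ → scriForm ψ φ = 0) → ψ = 0) :=
  ⟨fun _ _ h₁ h₂ => integrable_scriDensity h₁ h₂,
    fun _ _ _ h₁ h₁' h₂ a => scriForm_const_mul_add_left h₁ h₁' h₂ a,
    fun _ _ _ h₁ h₂ h₂' a => scriForm_const_mul_add_right h₁ h₂ h₂' a,
    fun ψ₁ ψ₂ _ _ => scriForm_antisymm ψ₁ ψ₂,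
    fun _ hψ h => hψ.eq_zero_of_scriForm_eq_zero h⟩
end
end

section
/- Let x = (t, 𝐱) ∈ ℝ × ℝ³, let n ∈ S², let u₀ ∈ ℝ with u₀ > t − ⟨𝐱, n⟩, and let V₀ ∈ ℝ. Then there exist t_z ∈ ℝ and r > 0 such that the point z = (t_z, r n) lies in the open future cone of x (i.e. t_z − t > ‖r n − 𝐱‖), and t − ⟨𝐱, n⟩ < t_z − r < u₀ and t_z + r > V₀. -/
open MeasureTheory Metric Filter
open scoped Topology InnerProductSpace

noncomputable section

/-- For `x = (t, 𝐱)`, a unit vector `n`, `u₀ > t − ⟨𝐱, n⟩ = C_x(n)` and arbitrary `V₀`,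
there is a point `z = (t_z, r n)` in the open future cone of `x` whose retarded coordinate
`t_z − r` lies in `(C_x(n), u₀)` and whose advanced coordinate `t_z + r` exceeds `V₀`. -/
theorem statement5 (t : ℝ) (x : E3) (n : E3) (hn : ‖n‖ = 1)
    (u₀ : ℝ) (hu₀ : u₀ > t - ⟪x, n⟫_ℝ) (V₀ : ℝ) :
    ∃ (tz r : ℝ), 0 < r ∧ tz - t > ‖r • n - x‖ ∧
      t - ⟪x, n⟫_ℝ < tz - r ∧ tz - r < u₀ ∧ tz + r > V₀ := by
  set δ : ℝ := (u₀ - (t - ⟪x, n⟫_ℝ)) / 2 with hδdef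
  have hδ : 0 < δ := by simp only [hδdef]; linarith
  set u : ℝ := t - ⟪x, n⟫_ℝ + δ with hudef
  set r : ℝ := 1 + max (max (‖x‖^2/(2*δ)) ((V₀-u)/2)) (t-u) with hrdef
  have hM0 : (0:ℝ) ≤ max (max (‖x‖^2/(2*δ)) ((V₀-u)/2)) (t-u) := by
    have : (0:ℝ) ≤ ‖x‖^2/(2*δ) := by positivity
    exact le_trans this (le_trans (le_max_left _ _) (le_max_left _ _))
  have hrpos : 0 < r := by simp only [hrdef]; linarith
  have hr1 : ‖x‖^2/(2*δ) < r := by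
    have := le_trans (le_max_left (‖x‖^2/(2*δ)) ((V₀-u)/2)) (le_max_left _ (t-u))
    simp only [hrdef]; linarith
  have hr2 : (V₀-u)/2 < r := by
    have := le_trans (le_max_right (‖x‖^2/(2*δ)) ((V₀-u)/2)) (le_max_left _ (t-u))
    simp only [hrdef]; linarith
  have hr3 : t - u < r := by
    have := le_max_right (max (‖x‖^2/(2*δ)) ((V₀-u)/2)) (t-u)
    simp only [hrdef]; linarith
  clear_value r u δ
  have hnorm : ‖r • n - x‖^2 = r^2 - 2*r*⟪x, n⟫_ℝ + ‖x‖^2 := by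
    have h1 : ‖r • n - x‖^2 = ‖r • n‖^2 - 2 * ⟪r • n, x⟫_ℝ + ‖x‖^2 :=
      norm_sub_sq_real (r • n) x
    have h2 : ‖r • n‖ = r := by
      rw [norm_smul, hn, Real.norm_eq_abs, abs_of_pos hrpos, mul_one]
    have h3 : ⟪r • n, x⟫_ℝ = r * ⟪x, n⟫_ℝ := by
      rw [real_inner_smul_left, real_inner_comm]
    rw [h1, h2, h3]; ring
  have hkey : ‖r • n - x‖ < u + r - t := by
    have hb : 0 < u + r - t := by linarith
    have hsq : ‖r • n - x‖^2 < (u + r - t)^2 := by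
      have hδu : u - t + ⟪x, n⟫_ℝ = δ := by simp [hudef]; ring
      have h2rδ : ‖x‖^2 < 2 * r * δ := by
        rw [div_lt_iff₀ (by positivity : (0:ℝ) < 2*δ)] at hr1
        linarith
      nlinarith [sq_nonneg (u - t)]
    exact lt_of_pow_lt_pow_left₀ 2 (le_of_lt hb) hsq
  refine ⟨u + r, r, hrpos, by linarith, ?_, ?_, by nlinarith [hr2]⟩
  · simp only [hudef]; linarith
  · simp only [hudef, hδdef]; linarith
end
end

section
/- Let C : S² → ℝ be continuous, let n₀ ∈ S² and let u₀ ∈ ℝ with u₀ > C(n₀). Then there exist t ∈ ℝ and 𝐱 ∈ ℝ³ such that t − ⟨𝐱, n⟩ > C(n) for every n ∈ S², and t − ⟨𝐱, n₀⟩ < u₀. -/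
open MeasureTheory Metric Filter
open scoped Topology InnerProductSpace

noncomputable section

/- The light-cone cut of `x = (c + 2r, 2r n₀)` is the paraboloid `n ↦ c + r ‖n - n₀‖²` over the
sphere, which equals `c` at `n₀`. Choosing `C n₀ < c < u₀`, continuity gives `C < c` near `n₀`, and
since `C` is bounded on the compact sphere a large enough `r` lifts the paraboloid above `C`
everywhere else. -/

theorem exists_lt_add_mul_dist_sq {X : Type*} [PseudoMetricSpace X] {f : X → ℝ} {x₀ : X}
    {c : ℝ} (hf : ContinuousAt f x₀) (hbdd : BddAbove (Set.range f)) (hc : f x₀ < c) :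
    ∃ r : ℝ, ∀ x, f x < c + r * dist x x₀ ^ 2 := by
  obtain ⟨δ, hδ, hnear⟩ := Metric.eventually_nhds_iff.mp (hf.eventually_lt continuousAt_const hc)
  obtain ⟨M, hM⟩ := hbdd
  refine ⟨(|M - c| + 1) / δ ^ 2, fun x => ?_⟩
  have hr : 0 ≤ (|M - c| + 1) / δ ^ 2 := by positivity
  rcases lt_or_ge (dist x x₀) δ with hx | hx
  · have := hnear hx
    nlinarith [mul_nonneg hr (sq_nonneg (dist x x₀))]
  · have hfar : |M - c| + 1 ≤ (|M - c| + 1) / δ ^ 2 * dist x x₀ ^ 2 := by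
      rw [div_mul_eq_mul_div, le_div_iff₀ (by positivity)]
      gcongr
    have := hM (Set.mem_range_self x)
    linarith [le_abs_self (M - c)]

theorem inner_eq_one_sub_dist_sq_div_two {E : Type*} [NormedAddCommGroup E]
    [InnerProductSpace ℝ E] (a b : sphere (0 : E) 1) :
    ⟪(a : E), (b : E)⟫_ℝ = 1 - dist a b ^ 2 / 2 := by
  have ha : ‖(a : E)‖ = 1 := norm_eq_of_mem_sphere a
  have hb : ‖(b : E)‖ = 1 := norm_eq_of_mem_sphere b
  rw [Subtype.dist_eq, dist_eq_norm, norm_sub_sq_real, ha, hb]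
  ring

theorem add_sub_inner_smul_eq_add_mul_dist_sq {E : Type*} [NormedAddCommGroup E]
    [InnerProductSpace ℝ E] (c r : ℝ) (a b : sphere (0 : E) 1) :
    c + 2 * r - ⟪(2 * r) • (a : E), (b : E)⟫_ℝ = c + r * dist b a ^ 2 := by
  rw [real_inner_smul_left, inner_eq_one_sub_dist_sq_div_two, dist_comm]
  ring

/-- Given a continuous cut `C : S² → ℝ`, a direction `n₀` and `u₀ > C(n₀)`, there is a
bulk point `x = (t, 𝐱)` whose light-cone cut `C_x(n) = t − ⟨𝐱, n⟩` lies strictly above `C`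
everywhere, while `C_x(n₀) < u₀`: the half-strips `K_x` cover `S_C`. -/
theorem statement8 (C : S2 → ℝ) (hC : Continuous C) (n₀ : S2) (u₀ : ℝ)
    (h : u₀ > C n₀) :
    ∃ (t : ℝ) (x : E3), (∀ n : S2, t - ⟪x, (n : E3)⟫_ℝ > C n) ∧
      t - ⟪x, (n₀ : E3)⟫_ℝ < u₀ := by
  obtain ⟨c, hCc, hcu⟩ := exists_between h
  obtain ⟨r, hr⟩ := exists_lt_add_mul_dist_sq hC.continuousAt
    (isCompact_range hC).bddAbove hCc
  refine ⟨c + 2 * r, (2 * r) • (n₀ : E3), fun n => ?_, ?_⟩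
  · rw [add_sub_inner_smul_eq_add_mul_dist_sq]
    exact hr n
  · rwa [add_sub_inner_smul_eq_add_mul_dist_sq, dist_self, sq, zero_mul, mul_zero, add_zero]
end
end

section
/- Let C, A : S² → ℝ be continuous with A ≥ 0, and let g : ℝ × S² → ℝ be continuous with compact support. Define S(t) := ∫_{S²} ∫_ℝ max(u − C(n) − t A(n), 0) · g(u,n)² du dσ(n) for t ∈ ℝ. Then S is differentiable on ℝ and S'(t) = − ∫_{S²} A(n) ( ∫_{C(n)+tA(n)}^{∞} g(u,n)² du ) dσ(n). -/
open MeasureTheory Metric Filter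
open scoped Topology InnerProductSpace

noncomputable section

/-! Put `Φ(b) = ∫ max(u - b, 0) h(u) du`, so that the inner integral is `Φ(C n + s A n)` with
`h = g(·, n)²`. The ramp `b ↦ max(u - b, 0)` is 1-Lipschitz with derivative `-1_{u > b}` off the
null set `{u = b}`, so differentiating under the integral sign gives `Φ'(b) = -∫_b^∞ h`, and `Φ`
is `‖h‖₁`-Lipschitz. Hence the inner integral is Lipschitz in `s` with constant
`|A n| ‖g(·, n)²‖₁`, which is continuous in `n` on the compact sphere, and a second
differentiation under the integral sign, with the chain rule, gives the formula. -/

open Set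

section Ramp

variable {h : ℝ → ℝ}

lemma hasDerivAt_max_sub_zero_mul {u b : ℝ} (hu : u ≠ b) (v : ℝ) :
    HasDerivAt (fun x => max (u - x) 0 * v) (-(Ioi b).indicator (fun _ => v) u) b := by
  rcases hu.lt_or_gt with hub | hbu
  · have hzero : (fun x => max (u - x) 0 * v) =ᶠ[𝓝 b] fun _ => 0 :=
      (eventually_gt_nhds hub).mono fun x hx => by
        dsimp only
        rw [max_eq_right (by linarith), zero_mul]
    rw [indicator_of_notMem (notMem_Ioi.2 hub.le), neg_zero]
    exact (hasDerivAt_const b 0).congr_of_eventuallyEq hzero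
  · have hlin : (fun x => max (u - x) 0 * v) =ᶠ[𝓝 b] fun x => (u - x) * v :=
      (eventually_lt_nhds hbu).mono fun x hx => by
        dsimp only
        rw [max_eq_left (by linarith)]
    rw [indicator_of_mem (mem_Ioi.2 hbu), ← neg_one_mul]
    exact (((hasDerivAt_id' b).const_sub u).mul_const v).congr_of_eventuallyEq hlin

lemma abs_max_sub_zero_sub_max_sub_zero_le (u x y : ℝ) :
    |max (u - x) 0 - max (u - y) 0| ≤ |x - y| := by
  simpa [abs_sub_comm] using abs_max_sub_max_le_abs (u - x) (u - y) 0

lemma integrable_max_sub_zero_mul (hh : Continuous h) (hs : HasCompactSupport h) (b : ℝ) :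
    Integrable fun u => max (u - b) 0 * h u :=
  (by fun_prop : Continuous fun u => max (u - b) 0 * h u).integrable_of_hasCompactSupport
    hs.mul_left

lemma abs_integral_max_sub_zero_mul_sub_le (hh : Continuous h) (hs : HasCompactSupport h)
    (x y : ℝ) :
    |(∫ u, max (u - x) 0 * h u) - ∫ u, max (u - y) 0 * h u| ≤ (∫ u, |h u|) * |x - y| := by
  rw [← integral_sub (integrable_max_sub_zero_mul hh hs x) (integrable_max_sub_zero_mul hh hs y),
    ← integral_mul_const]
  refine abs_integral_le_integral_abs.trans <| integral_mono
    ((integrable_max_sub_zero_mul hh hs x).sub (integrable_max_sub_zero_mul hh hs y)).abs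
    ((hh.integrable_of_hasCompactSupport hs).abs.mul_const _) fun u => ?_
  rw [← sub_mul, abs_mul, mul_comm]
  exact mul_le_mul_of_nonneg_left (abs_max_sub_zero_sub_max_sub_zero_le u x y) (abs_nonneg _)

theorem hasDerivAt_integral_max_sub_zero_mul (hh : Continuous h) (hs : HasCompactSupport h)
    (b : ℝ) :
    HasDerivAt (fun x => ∫ u, max (u - x) 0 * h u) (-∫ u in Ioi b, h u) b := by
  have hint : Integrable h := hh.integrable_of_hasCompactSupport hs
  have hlip : ∀ u, LipschitzWith (Real.nnabs (h u)) fun x => max (u - x) 0 * h u := fun u =>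
    LipschitzWith.of_dist_le_mul fun x y => by
      rw [Real.dist_eq, Real.dist_eq, ← sub_mul, abs_mul, Real.coe_nnabs, mul_comm]
      exact mul_le_mul_of_nonneg_left (abs_max_sub_zero_sub_max_sub_zero_le u x y) (abs_nonneg _)
  have hdiff : ∀ᵐ u, HasDerivAt (fun x => max (u - x) 0 * h u) (-(Ioi b).indicator h u) b := by
    filter_upwards [volume.ae_ne b] with u hu
    exact hasDerivAt_max_sub_zero_mul hu (h u)
  have key := (hasDerivAt_integral_of_dominated_loc_of_lip univ_mem
    (Eventually.of_forall fun x => (integrable_max_sub_zero_mul hh hs x).aestronglyMeasurable)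
    (integrable_max_sub_zero_mul hh hs b)
    (hint.indicator measurableSet_Ioi).neg.aestronglyMeasurable
    (Eventually.of_forall fun u => (hlip u).lipschitzOnWith) hint hdiff).2
  rwa [Pi.neg_def, integral_neg, integral_indicator measurableSet_Ioi] at key

end Ramp

theorem continuous_integral_of_hasCompactSupport {X Y E : Type*} [TopologicalSpace X]
    [TopologicalSpace Y] [MeasurableSpace Y] [OpensMeasurableSpace Y] {ν : Measure Y}
    [IsFiniteMeasureOnCompacts ν] [NormedAddCommGroup E] [NormedSpace ℝ E] {f : Y × X → E}
    (hf : Continuous f) (hs : HasCompactSupport f) :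
    Continuous fun x => ∫ y, f (y, x) ∂ν := by
  refine continuousOn_univ.1 <| continuousOn_integral_of_compact_support (hs.image continuous_fst)
    (hf.comp continuous_swap).continuousOn fun x y _ hy => ?_
  exact image_eq_zero_of_notMem_tsupport fun hmem => hy ⟨(y, x), hmem, rfl⟩

section Parametric

variable {X : Type*} [TopologicalSpace X] [CompactSpace X] [MeasurableSpace X]
  [OpensMeasurableSpace X] {μ : Measure X} [IsFiniteMeasure μ]

theorem hasDerivAt_integral_integral_max_sub_sub_mul {C A : X → ℝ} (hC : Continuous C)
    (hA : Continuous A) {h : ℝ × X → ℝ} (hh : Continuous h) (hs : HasCompactSupport h) (t : ℝ) :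
    HasDerivAt (fun s => ∫ n, (∫ u, max (u - C n - s * A n) 0 * h (u, n)) ∂μ)
      (-∫ n, A n * (∫ u in Ioi (C n + t * A n), h (u, n)) ∂μ) t := by
  simp only [sub_sub]
  have hslice (n : X) : HasCompactSupport fun u => h (u, n) :=
    HasCompactSupport.intro (hs.image continuous_fst) fun u hu =>
      image_eq_zero_of_notMem_tsupport fun hmem => hu ⟨(u, n), hmem, rfl⟩
  have hF (s : ℝ) : Continuous fun n => ∫ u, max (u - (C n + s * A n)) 0 * h (u, n) :=
    continuous_integral_of_hasCompactSupport
      (f := fun p => max (p.1 - (C p.2 + s * A p.2)) 0 * h p) (by fun_prop) hs.mul_left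
  have hbound : Continuous fun n => A n * ∫ u, |h (u, n)| :=
    hA.mul (continuous_integral_of_hasCompactSupport (f := fun p => |h p|) (by fun_prop) hs.abs)
  have hF' : AEStronglyMeasurable
      (fun n => -(A n * ∫ u in Ioi (C n + t * A n), h (u, n))) μ := by
    have hT : MeasurableSet {p : ℝ × X | C p.2 + t * A p.2 < p.1} :=
      measurableSet_lt (by fun_prop) (by fun_prop)
    have hm := ((hh.measurable.indicator hT).stronglyMeasurable.integral_prod_left'
      (μ := volume)).aestronglyMeasurable (μ := μ)
    refine (hA.aestronglyMeasurable.mul ?_).neg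
    convert hm using 2 with n
    exact (integral_indicator measurableSet_Ioi).symm
  have key := hasDerivAt_integral_of_dominated_loc_of_lip (μ := μ)
    (bound := fun n => A n * ∫ u, |h (u, n)|) univ_mem
    (Eventually.of_forall fun s => (hF s).aestronglyMeasurable)
    ((hF t).integrable_of_hasCompactSupport (.of_compactSpace _)) hF'
    (Eventually.of_forall fun n => LipschitzOnWith.of_dist_le_mul fun x _ y _ => ?_)
    (hbound.integrable_of_hasCompactSupport (.of_compactSpace _))
    (Eventually.of_forall fun n => ?_)
  · rw [integral_neg] at key
    exact key.2
  · rw [Real.dist_eq, Real.dist_eq, Real.coe_nnabs]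
    calc _ ≤ (∫ u, |h (u, n)|) * |C n + x * A n - (C n + y * A n)| :=
          abs_integral_max_sub_zero_mul_sub_le (by fun_prop) (hslice n) _ _
      _ = |A n * (∫ u, |h (u, n)|)| * |x - y| := by
          rw [add_sub_add_left_eq_sub, ← sub_mul, abs_mul, abs_mul,
            abs_of_nonneg (integral_nonneg fun _ => abs_nonneg _)]
          ring
  · have := (hasDerivAt_integral_max_sub_zero_mul (by fun_prop) (hslice n)
      (C n + t * A n)).comp t ((hasDerivAt_mul_const (A n)).const_add (C n))
    rwa [neg_mul, mul_comm] at this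

end Parametric

theorem statement10_general (C A : S2 → ℝ) (hC : Continuous C) (hA : Continuous A)
    (g : ℝ × S2 → ℝ) (hg : Continuous g)
    (hgsupp : HasCompactSupport g) (t : ℝ) :
    HasDerivAt
      (fun s : ℝ => ∫ n : S2,
        (∫ u : ℝ, max (u - C n - s * A n) 0 * (g (u, n)) ^ 2) ∂sphereMeasure)
      (-∫ n : S2, A n * (∫ u in Set.Ioi (C n + t * A n), (g (u, n)) ^ 2) ∂sphereMeasure)
      t := by
  have : IsFiniteMeasure sphereMeasure := by unfold sphereMeasure; infer_instance
  exact hasDerivAt_integral_integral_max_sub_sub_mul (h := fun p => g p ^ 2) hC hA (hg.pow 2)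
    (hgsupp.comp_left (g := (· ^ 2)) (zero_pow two_ne_zero)) t

/-- The entropy functional
`S(t) = ∫_{S²} ∫_ℝ max(u − C(n) − t A(n), 0) g(u,n)² du dσ(n)`
is differentiable in the deformation parameter `t`, with derivative
`S'(t) = − ∫_{S²} A(n) ∫_{C(n)+tA(n)}^∞ g(u,n)² du dσ(n)`. -/
theorem statement10 (C A : S2 → ℝ) (hC : Continuous C) (hA : Continuous A)
    (hA0 : ∀ n, 0 ≤ A n) (g : ℝ × S2 → ℝ) (hg : Continuous g)
    (hgsupp : HasCompactSupport g) (t : ℝ) :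
    HasDerivAt
      (fun s : ℝ => ∫ n : S2,
        (∫ u : ℝ, max (u - C n - s * A n) 0 * (g (u, n)) ^ 2) ∂sphereMeasure)
      (-∫ n : S2, A n * (∫ u in Set.Ioi (C n + t * A n), (g (u, n)) ^ 2) ∂sphereMeasure)
      t :=
  statement10_general C A hC hA g hg hgsupp t
end
end

section
/- Let C, A : S² → ℝ be continuous with A ≥ 0, and let g : ℝ × S² → ℝ be continuous with compact support. Define S(t) := ∫_{S²} ∫_ℝ max(u − C(n) − t A(n), 0) · g(u,n)² du dσ(n) for t ∈ ℝ. Then S is twice differentiable on ℝ with S''(t) = ∫_{S²} A(n)² g(C(n) + t A(n), n)² dσ(n) ≥ 0; in particular S is convex on ℝ. -/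
open MeasureTheory Metric Filter
open scoped Topology InnerProductSpace

noncomputable section

/-! For fixed `n` put `x = C n + s * A n` and let `M` bound the `u`-support of `g`. The
inner integral is then `∫_M^x (x - u) g(u,n)² du`, whose `x`-derivative is `∫_M^x g(u,n)² du`
and whose second `x`-derivative is `g(x,n)²`; the chain rule contributes a factor `A n` each
time. All these functions are jointly continuous in `(s, n)`, hence locally uniformly bounded
on the compact sphere, so both `s`-derivatives may be taken under the `dσ` integral. The second
derivative is an integral of squares, and a function with nonnegative second derivative is
convex. -/

section RampIntegral

variable {w : ℝ → ℝ} {M : ℝ}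

theorem integral_max_sub_mul_eq_intervalIntegral (hM : ∀ u, M < u → w u = 0) (x : ℝ) :
    ∫ u, max (u - x) 0 * w u = ∫ u in M..x, (x - u) * w u := by
  have h_ind : (fun u => max (u - x) 0 * w u)
      = Set.indicator (Set.Ioc x M) fun u => (u - x) * w u := by
    funext u
    by_cases hu : u ∈ Set.Ioc x M
    · rw [Set.indicator_of_mem hu, max_eq_left (by linarith [hu.1])]
    · rw [Set.indicator_of_notMem hu]
      rcases le_or_gt u x with hux | hxu
      · rw [max_eq_right (by linarith), zero_mul]
      · rw [hM u (lt_of_not_ge fun h => hu ⟨hxu, h⟩), mul_zero]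
  have h_vanish : ∫ u in Set.Ioc M x, (x - u) * w u = 0 :=
    setIntegral_eq_zero_of_forall_eq_zero fun u hu => by rw [hM u hu.1, mul_zero]
  rw [h_ind, integral_indicator measurableSet_Ioc, intervalIntegral, h_vanish, zero_sub,
    ← integral_neg]
  congr 1 with u
  ring

theorem hasDerivAt_intervalIntegral_sub_mul (hw : Continuous w) (M x : ℝ) :
    HasDerivAt (fun y => ∫ u in M..y, (y - u) * w u) (∫ u in M..x, w u) x := by
  have hw' : Continuous fun u => u * w u := by fun_prop
  have h_split : (fun y => ∫ u in M..y, (y - u) * w u)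
      = fun y => y * (∫ u in M..y, w u) - ∫ u in M..y, u * w u := by
    funext y
    simp only [sub_mul]
    rw [intervalIntegral.integral_sub (f := fun u => y * w u) (g := fun u => u * w u)
      ((continuous_const.mul hw).intervalIntegrable _ _)
      (hw'.intervalIntegrable _ _), intervalIntegral.integral_const_mul]
  rw [h_split]
  exact ((hasDerivAt_id' x).mul (hw.integral_hasStrictDerivAt M x).hasDerivAt).sub
    (hw'.integral_hasStrictDerivAt M x).hasDerivAt |>.congr_deriv (by ring)

theorem hasDerivAt_integral_max_sub_mul (hw : Continuous w) (hM : ∀ u, M < u → w u = 0)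
    (x : ℝ) :
    HasDerivAt (fun y => ∫ u, max (u - y) 0 * w u) (∫ u in M..x, w u) x := by
  simp only [integral_max_sub_mul_eq_intervalIntegral hM]
  exact hasDerivAt_intervalIntegral_sub_mul hw M x

theorem continuous_integral_max_sub_mul {X : Type*} [TopologicalSpace X] {f : ℝ × X → ℝ}
    (hf : Continuous f) (hM : ∀ u n, M < u → f (u, n) = 0) {y : X → ℝ} (hy : Continuous y) :
    Continuous fun n => ∫ u, max (u - y n) 0 * f (u, n) := by
  simp only [integral_max_sub_mul_eq_intervalIntegral (hM · _)]
  fun_prop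

end RampIntegral

theorem HasCompactSupport.exists_apply_eq_zero_of_lt_fst {X E : Type*} [TopologicalSpace X]
    [Zero E] {f : ℝ × X → E} (hf : HasCompactSupport f) :
    ∃ M, ∀ u n, M < u → f (u, n) = 0 := by
  obtain ⟨M, hM⟩ := (IsCompact.image hf continuous_fst).bddAbove
  exact ⟨M, fun u n hu =>
    image_eq_zero_of_notMem_tsupport fun h => hu.not_ge (hM ⟨(u, n), h, rfl⟩)⟩

theorem hasDerivAt_integral_of_continuous_uncurry_deriv {X : Type*} [TopologicalSpace X]
    [CompactSpace X] [MeasurableSpace X] [OpensMeasurableSpace X] (μ : Measure X)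
    [IsFiniteMeasure μ] {F F' : ℝ → X → ℝ} (hF : ∀ s, Continuous (F s))
    (hF' : Continuous (Function.uncurry F')) (hderiv : ∀ s n, HasDerivAt (F · n) (F' s n) s)
    (t : ℝ) : HasDerivAt (fun s => ∫ n, F s n ∂μ) (∫ n, F' t n ∂μ) t := by
  obtain ⟨K, hK⟩ := (isCompact_closedBall t 1 |>.prod isCompact_univ)
    |>.exists_bound_of_continuousOn hF'.continuousOn
  refine (hasDerivAt_integral_of_dominated_loc_of_deriv_le (closedBall_mem_nhds t one_pos)
    (.of_forall fun s => (hF s).aestronglyMeasurable)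
    ((hF t).integrable_of_hasCompactSupport (.of_compactSpace _))
    (hF'.comp (Continuous.prodMk_right t)).aestronglyMeasurable
    (ae_of_all _ fun n s hs => hK (s, n) ⟨hs, Set.mem_univ n⟩) (integrable_const K)
    (ae_of_all _ fun n s _ => hderiv s n)).2

theorem convexOn_univ_of_hasDerivAt2_nonneg {f f' f'' : ℝ → ℝ}
    (hf : ∀ x, HasDerivAt f (f' x) x) (hf' : ∀ x, HasDerivAt f' (f'' x) x)
    (hf'' : ∀ x, 0 ≤ f'' x) : ConvexOn ℝ Set.univ f :=
  convexOn_of_hasDerivWithinAt2_nonneg convex_univ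
    (fun x _ => (hf x).continuousAt.continuousWithinAt)
    (fun x _ => (hf x).hasDerivWithinAt) (fun x _ => (hf' x).hasDerivWithinAt) fun x _ => hf'' x

theorem statement11_general (C A : S2 → ℝ) (hC : Continuous C) (hA : Continuous A)
    (g : ℝ × S2 → ℝ) (hg : Continuous g)
    (hgsupp : HasCompactSupport g) :
    ∃ S' : ℝ → ℝ,
      (∀ t : ℝ, HasDerivAt
        (fun s : ℝ => ∫ n : S2,
          (∫ u : ℝ, max (u - C n - s * A n) 0 * (g (u, n)) ^ 2) ∂sphereMeasure)
        (S' t) t) ∧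
      (∀ t : ℝ, HasDerivAt S'
        (∫ n : S2, (A n) ^ 2 * (g (C n + t * A n, n)) ^ 2 ∂sphereMeasure) t) ∧
      (∀ t : ℝ, 0 ≤ ∫ n : S2, (A n) ^ 2 * (g (C n + t * A n, n)) ^ 2 ∂sphereMeasure) ∧
      ConvexOn ℝ Set.univ
        (fun s : ℝ => ∫ n : S2,
          (∫ u : ℝ, max (u - C n - s * A n) 0 * (g (u, n)) ^ 2) ∂sphereMeasure) := by
  have : IsFiniteMeasure sphereMeasure := by unfold sphereMeasure; infer_instance
  obtain ⟨M, hM⟩ := hgsupp.exists_apply_eq_zero_of_lt_fst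
  have hM2 : ∀ u n, M < u → g (u, n) ^ 2 = 0 := fun u n hu => by simp [hM u n hu]
  have hx : ∀ n s, HasDerivAt (fun s => C n + s * A n) (A n) s := fun n s =>
    (hasDerivAt_mul_const (A n)).const_add (C n)
  have hS' : ∀ t, HasDerivAt
      (fun s => ∫ n, (∫ u, max (u - (C n + s * A n)) 0 * g (u, n) ^ 2) ∂sphereMeasure)
      (∫ n, (∫ u in M..C n + t * A n, g (u, n) ^ 2) * A n ∂sphereMeasure) t :=
    hasDerivAt_integral_of_continuous_uncurry_deriv sphereMeasure
      (fun s => continuous_integral_max_sub_mul (hg.pow 2) hM2 (by fun_prop)) (by fun_prop)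
      fun s n => (hasDerivAt_integral_max_sub_mul (by fun_prop) (hM2 · n) _).comp s (hx n s)
  have hS'' : ∀ t, HasDerivAt
      (fun s => ∫ n, (∫ u in M..C n + s * A n, g (u, n) ^ 2) * A n ∂sphereMeasure)
      (∫ n, A n ^ 2 * g (C n + t * A n, n) ^ 2 ∂sphereMeasure) t :=
    hasDerivAt_integral_of_continuous_uncurry_deriv sphereMeasure (fun s => by fun_prop)
      (by fun_prop) fun s n => by
        have hgn : Continuous fun u => g (u, n) ^ 2 := by fun_prop
        exact ((hgn.integral_hasStrictDerivAt M _).hasDerivAt.comp s (hx n s)).mul_const (A n)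
          |>.congr_deriv (by ring)
  have hS''_nonneg : ∀ t, 0 ≤ ∫ n, A n ^ 2 * g (C n + t * A n, n) ^ 2 ∂sphereMeasure :=
    fun t => integral_nonneg fun n => by positivity
  simp only [sub_sub]
  exact ⟨_, hS', hS'', hS''_nonneg, convexOn_univ_of_hasDerivAt2_nonneg hS' hS'' hS''_nonneg⟩

/-- QNEC: the entropy functional
`S(t) = ∫_{S²} ∫_ℝ max(u − C(n) − t A(n), 0) g(u,n)² du dσ(n)`
is twice differentiable with
`S''(t) = ∫_{S²} A(n)² g(C(n) + t A(n), n)² dσ(n) ≥ 0`; in particular `S` is convex. -/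
theorem statement11 (C A : S2 → ℝ) (hC : Continuous C) (hA : Continuous A)
    (hA0 : ∀ n, 0 ≤ A n) (g : ℝ × S2 → ℝ) (hg : Continuous g)
    (hgsupp : HasCompactSupport g) :
    ∃ S' : ℝ → ℝ,
      (∀ t : ℝ, HasDerivAt
        (fun s : ℝ => ∫ n : S2,
          (∫ u : ℝ, max (u - C n - s * A n) 0 * (g (u, n)) ^ 2) ∂sphereMeasure)
        (S' t) t) ∧
      (∀ t : ℝ, HasDerivAt S'
        (∫ n : S2, (A n) ^ 2 * (g (C n + t * A n, n)) ^ 2 ∂sphereMeasure) t) ∧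
      (∀ t : ℝ, 0 ≤ ∫ n : S2, (A n) ^ 2 * (g (C n + t * A n, n)) ^ 2 ∂sphereMeasure) ∧
      ConvexOn ℝ Set.univ
        (fun s : ℝ => ∫ n : S2,
          (∫ u : ℝ, max (u - C n - s * A n) 0 * (g (u, n)) ^ 2) ∂sphereMeasure) :=
  statement11_general C A hC hA g hg hgsupp
end
end

section
/- Let f : ℝ × ℝ³ → ℝ be smooth with compact support, and define F : ℝ × S² → ℝ by F(u, n) := ∫_{ℝ³} f(u + ⟨n, x⟩, x) dx. Then F is smooth on ℝ × S² (with respect to the product manifold structure), and there exists R > 0 such that F(u, n) = 0 whenever |u| ≥ R, for all n ∈ S². -/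
open MeasureTheory Metric Filter
open scoped Topology Manifold InnerProductSpace
open scoped Convolution

noncomputable section

/-- The boundary datum `F(u, n) = ∫_{ℝ³} f(u + ⟨n,x⟩, x) dx` of the bulk solution
generated by a smooth compactly supported `f` is smooth on the manifold `ℝ × S²` and
vanishes for `|u|` large, uniformly in `n`. -/
theorem statement18 (f : ℝ × E3 → ℝ) (hf : ContDiff ℝ (⊤ : ℕ∞) f)
    (hsupp : HasCompactSupport f) :
    ContMDiff ((𝓘(ℝ, ℝ)).prod (𝓡 2)) (𝓘(ℝ, ℝ)) (⊤ : ℕ∞)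
      (fun p : ℝ × S2 => ∫ x : E3, f (p.1 + ⟪(p.2 : E3), x⟫_ℝ, x)) ∧
    ∃ R : ℝ, 0 < R ∧ ∀ (u : ℝ) (n : S2), R ≤ |u| →
      (∫ x : E3, f (u + ⟪(n : E3), x⟫_ℝ, x)) = 0 := by
  obtain ⟨C, hC⟩ := hsupp.isCompact.isBounded.subset_closedBall 0
  have hCf : ∀ t : ℝ, ∀ x : E3, (C < |t| ∨ C < ‖x‖) → f (t, x) = 0 := by
    intro t x h
    by_contra hne
    have : (t, x) ∈ tsupport f := subset_tsupport f hne
    have := hC this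
    simp [Prod.norm_def, dist_eq_norm] at this
    rcases h with h | h
    · exact absurd this.1 (by simpa [Real.norm_eq_abs] using not_le.2 h)
    · exact absurd this.2 (not_le.2 h)
  set g : (ℝ × E3) → E3 → ℝ := fun p x => f (p.1 + ⟪p.2, x⟫_ℝ, x) with hg_def
  have hgs : ∀ p : ℝ × E3, ∀ x : E3, p ∈ (Set.univ : Set (ℝ × E3)) →
      x ∉ closedBall (0 : E3) |C| → g p x = 0 := by
    intro p x _ hx
    apply hCf
    right
    have : |C| < ‖x‖ := not_le.1 (fun h => hx (mem_closedBall_zero_iff.2 h))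
    exact lt_of_le_of_lt (le_abs_self C) this
  have hgsm : ContDiffOn ℝ (⊤ : ℕ∞) ↿g ((Set.univ : Set (ℝ × E3)) ×ˢ Set.univ) := by
    apply ContDiff.contDiffOn
    apply hf.comp
    exact ContDiff.prodMk (contDiff_fst.fst.add ((contDiff_fst.snd).inner ℝ contDiff_snd))
      contDiff_snd
  have hconv := contDiffOn_convolution_right_with_param
    (ContinuousLinearMap.lsmul ℝ ℝ) isOpen_univ (isCompact_closedBall (0 : E3) |C|)
    hgs (locallyIntegrable_const (μ := (volume : Measure E3)) (1 : ℝ)) hgsm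
  have hG : ContDiff ℝ (⊤ : ℕ∞)
      (fun p : ℝ × E3 => ∫ x : E3, f (p.1 + ⟪p.2, x⟫_ℝ, x)) := by
    have h0 : ∀ p : ℝ × E3,
        ((fun _ : E3 => (1:ℝ)) ⋆[ContinuousLinearMap.lsmul ℝ ℝ, volume] g p) 0
          = ∫ x : E3, f (p.1 + ⟪p.2, x⟫_ℝ, x) := by
      intro p
      rw [convolution]
      simp only [ContinuousLinearMap.lsmul_apply, one_smul, zero_sub]
      exact integral_neg_eq_self _ _
    have h2 : ContDiffOn ℝ (⊤ : ℕ∞) (fun p : ℝ × E3 =>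
        ((fun _ : E3 => (1:ℝ)) ⋆[ContinuousLinearMap.lsmul ℝ ℝ, volume] g p) 0)
        Set.univ := by
      refine hconv.comp ((contDiff_id.prodMk contDiff_const).contDiffOn) ?_
      intro p _
      simp
    rw [contDiffOn_univ] at h2
    have heq : (fun p : ℝ × E3 =>
        ((fun _ : E3 => (1:ℝ)) ⋆[ContinuousLinearMap.lsmul ℝ ℝ, volume] g p) 0)
        = fun p : ℝ × E3 => ∫ x : E3, f (p.1 + ⟪p.2, x⟫_ℝ, x) := funext h0
    rwa [heq] at h2
  constructor
  · have hι : ContMDiff ((𝓘(ℝ, ℝ)).prod (𝓡 2)) (𝓘(ℝ, ℝ × E3)) (⊤ : ℕ∞)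
        (fun p : ℝ × S2 => ((p.1, (p.2 : E3)) : ℝ × E3)) := by
      rw [modelWithCornersSelf_prod, ← chartedSpaceSelf_prod]
      exact contMDiff_fst.prodMk ((contMDiff_coe_sphere).comp contMDiff_snd)
    exact hG.contMDiff.comp hι
  · refine ⟨2 * |C| + 1, by positivity, ?_⟩
    intro u n hu
    have : ∀ x : E3, f (u + ⟪(n : E3), x⟫_ℝ, x) = 0 := by
      intro x
      rcases le_or_gt ‖x‖ C with hx | hx
      · apply hCf; left
        have h1 : |⟪(n : E3), x⟫_ℝ| ≤ C := by
          calc |⟪(n : E3), x⟫_ℝ| ≤ ‖(n : E3)‖ * ‖x‖ := abs_real_inner_le_norm _ _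
          _ ≤ 1 * C := by
              have hn : ‖(n : E3)‖ = 1 := by simpa using mem_sphere_zero_iff_norm.1 n.2
              rw [hn]; nlinarith [norm_nonneg x]
          _ = C := one_mul C
        have hCC : C ≤ |C| := le_abs_self C
        have : 2 * |C| + 1 ≤ |u| := hu
        have := abs_sub_abs_le_abs_sub (u + ⟪(n : E3), x⟫_ℝ) (⟪(n : E3), x⟫_ℝ)
        simp only [add_sub_cancel_right] at this
        cases abs_cases u <;> cases abs_cases (u + ⟪(n : E3), x⟫_ℝ) <;>
          cases abs_cases (⟪(n : E3), x⟫_ℝ) <;> linarith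
      · exact hCf _ _ (Or.inr hx)
    simp only [this, integral_zero]
end
end
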